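/- arXiv:1303.3461 — 2 statements merged into one kernel-verified Lean document; each statement's English description precedes it below -/
import Mathlib

section
/- Let d ≥ 3 be a natural number and let n be an integer with 0 ≤ n < d/3. Then the point m_{J(n)} = Σ_{ν ∈ J(n)} ν is a vertex (extreme point) of the polytope Q(d). -/
/-!
Put `ℓ(ν) = ν 1 + (d - 2n + 1) ν 2`. The `d + 1` points of `J(n)` all have `ℓ ≤ d - n`, while
every other point of `Δ` has `ℓ ≥ d - n + 1` (the bound `3n < d` is what makes `ν 2 ≥ 2`
expensive enough). Exchanging points then shows that `J(n)` is the unique `(d + 1)`-subset of `Δ`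
minimising `∑ ℓ`, so the linear functional `x ↦ x 1 + (d - 2n + 1) x 2` attains its minimum over
the generators `m_J` of `Q(d)` only at `m_{J(n)}`, which is therefore a vertex.
-/

/-- The set of exponent vectors of degree-`d` monomials in three variables:
`Δ = {ν ∈ ℕ³ : ν₁ + ν₂ + ν₃ = d}`. -/
def Delta (d : ℕ) : Set (Fin 3 → ℕ) := {ν | ν 0 + ν 1 + ν 2 = d}

/-- `N(d)`: the collection of subsets `J ⊆ Δ` with `|J| = d + 1`. -/
def Nd (d : ℕ) : Set (Finset (Fin 3 → ℕ)) := {J | ↑J ⊆ Delta d ∧ J.card = d + 1}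

/-- `m_J = Σ_{ν ∈ J} ν ∈ ℕ³`. -/
def mJ (J : Finset (Fin 3 → ℕ)) : Fin 3 → ℕ := ∑ ν ∈ J, ν

/-- The inclusion `ℕ³ ⊆ ℝ³`. -/
def toR (ν : Fin 3 → ℕ) : Fin 3 → ℝ := fun i => (ν i : ℝ)

/-- The polytope `Q(d) = conv(m_J : J ∈ N(d)) ⊆ ℝ³`. -/
def Qpoly (d : ℕ) : Set (Fin 3 → ℝ) :=
  convexHull ℝ {x | ∃ J ∈ Nd d, x = toR (mJ J)}

/-- The index set
`J(n) = {(d−a−1, a, 1) : 0 ≤ a ≤ n−1} ∪ {(d−b, b, 0) : 0 ≤ b ≤ d−n}`. -/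
def Jn (d n : ℕ) : Finset (Fin 3 → ℕ) :=
  ((Finset.range n).image fun a => ![d - a - 1, a, 1]) ∪
    ((Finset.range (d - n + 1)).image fun b => ![d - b, b, 0])

open Finset

section ExtremePoint

variable {𝕜 E : Type*} [Field 𝕜] [LinearOrder 𝕜] [IsStrictOrderedRing 𝕜]
  [AddCommGroup E] [Module 𝕜 E]

lemma convex_insert_halfSpace_gt (l : E →ₗ[𝕜] 𝕜) (x : E) :
    Convex 𝕜 (insert x {y | l x < l y}) := by
  intro y hy z hz a b ha hb hab
  have hlin : l (a • y + b • z) = a * l y + b * l z := by simp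
  rcases hy with rfl | hy <;> rcases hz with rfl | hz
  · exact Or.inl (Convex.combo_self hab _)
  · rcases hb.eq_or_lt with rfl | hb
    · left; simp_all
    · right
      have : b * l y < b * l z := mul_lt_mul_of_pos_left hz hb
      show l y < _; rw [hlin]; linear_combination this - l y * hab
  · rcases ha.eq_or_lt with rfl | ha
    · left; simp_all
    · right
      have : a * l z < a * l y := mul_lt_mul_of_pos_left hy ha
      show l z < _; rw [hlin]; linear_combination this - l z * hab
  · exact Or.inr (convex_halfSpace_gt l.isLinear (l x) hy hz ha hb hab)

lemma mem_extremePoints_insert_halfSpace_gt (l : E →ₗ[𝕜] 𝕜) (x : E) :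
    x ∈ (insert x {y | l x < l y}).extremePoints 𝕜 := by
  refine ⟨Set.mem_insert x _, ?_⟩
  rintro y (rfl | hy) z hz ⟨a, b, ha, hb, hab, hx⟩
  · rfl
  have hz : l x ≤ l z := by rcases hz with rfl | hz; exacts [le_rfl, hz.le]
  have hlx : l x = a * l y + b * l z := by rw [← hx]; simp
  have : a * l x < a * l y := mul_lt_mul_of_pos_left hy ha
  have : b * l x ≤ b * l z := mul_le_mul_of_nonneg_left hz hb.le
  have : a * l x + b * l x = l x := by rw [← add_mul, hab, one_mul]
  linarith

lemma mem_extremePoints_convexHull_of_forall_lt (l : E →ₗ[𝕜] 𝕜) {s : Set E} {x : E}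
    (hx : x ∈ s) (h : ∀ y ∈ s, y ≠ x → l x < l y) :
    x ∈ (convexHull 𝕜 s).extremePoints 𝕜 := by
  have hsub : convexHull 𝕜 s ⊆ insert x {y | l x < l y} :=
    convexHull_min (fun y hy => (eq_or_ne y x).imp id (h y hy))
      (convex_insert_halfSpace_gt l x)
  exact inter_extremePoints_subset_extremePoints_of_subset hsub
    ⟨subset_convexHull 𝕜 s hx, mem_extremePoints_insert_halfSpace_gt l x⟩

end ExtremePoint

lemma Finset.sum_lt_sum_of_card_eq_of_le_of_lt {ι β : Type*} [DecidableEq ι]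
    [AddCommMonoid β] [LinearOrder β] [IsOrderedCancelAddMonoid β]
    {s t : Finset ι} {f : ι → β} {c : β} (hcard : #s = #t) (hst : s ≠ t)
    (hs : ∀ i ∈ s, f i ≤ c) (ht : ∀ i ∈ t \ s, c < f i) :
    ∑ i ∈ s, f i < ∑ i ∈ t, f i := by
  have hne : (t \ s).Nonempty := by
    rw [nonempty_iff_ne_empty, Ne, sdiff_eq_empty_iff_subset]
    exact fun hts => hst (eq_of_subset_of_card_le hts hcard.le).symm
  rw [← sum_sdiff_lt_sum_sdiff]
  calc ∑ i ∈ s \ t, f i ≤ #(s \ t) • c :=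
        sum_le_card_nsmul _ _ _ fun i hi => hs i (mem_sdiff.1 hi).1
    _ = ∑ i ∈ t \ s, c := by rw [sum_const, card_sdiff_comm hcard]
    _ < ∑ i ∈ t \ s, f i := sum_lt_sum_of_nonempty hne ht

def ell (d n : ℕ) (ν : Fin 3 → ℕ) : ℕ := ν 1 + (d - 2 * n + 1) * ν 2

lemma eq_vec_of_mem_Delta {d : ℕ} {ν : Fin 3 → ℕ} (hν : ν ∈ Delta d) :
    ν = ![d - ν 1 - ν 2, ν 1, ν 2] := by
  have hsum : ν 0 + ν 1 + ν 2 = d := hν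
  ext i; fin_cases i <;> simp; omega

lemma mem_Jn_iff {d n : ℕ} {ν : Fin 3 → ℕ} :
    ν ∈ Jn d n ↔ (∃ a < n, ![d - a - 1, a, 1] = ν) ∨ ∃ b ≤ d - n, ![d - b, b, 0] = ν := by
  simp [Jn]

lemma Jn_subset_Delta {d n : ℕ} (hn : n ≤ d) : ↑(Jn d n) ⊆ Delta d := by
  intro ν hν
  rcases mem_Jn_iff.1 hν with ⟨a, ha, rfl⟩ | ⟨b, hb, rfl⟩ <;> simp [Delta] <;> omega

lemma card_Jn {d n : ℕ} (hn : n ≤ d) : #(Jn d n) = d + 1 := by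
  have hinj₁ : Function.Injective fun a : ℕ => ![d - a - 1, a, 1] := fun a b h => by
    simpa using congrFun h 1
  have hinj₂ : Function.Injective fun b : ℕ => ![d - b, b, 0] := fun a b h => by
    simpa using congrFun h 1
  rw [Jn, card_union_of_disjoint (by simp [disjoint_left]), card_image_of_injective _ hinj₁,
    card_image_of_injective _ hinj₂, card_range, card_range]
  omega

lemma Jn_mem_Nd {d n : ℕ} (hn : n ≤ d) : Jn d n ∈ Nd d := ⟨Jn_subset_Delta hn, card_Jn hn⟩

lemma ell_le_of_mem_Jn {d n : ℕ} (hn : 2 * n ≤ d) {ν : Fin 3 → ℕ} (hν : ν ∈ Jn d n) :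
    ell d n ν ≤ d - n := by
  rcases mem_Jn_iff.1 hν with ⟨a, ha, rfl⟩ | ⟨b, hb, rfl⟩ <;> simp [ell] <;> omega

lemma lt_ell_of_notMem_Jn {d n : ℕ} (hn : 3 * n < d) {ν : Fin 3 → ℕ} (hν : ν ∈ Delta d)
    (hνJ : ν ∉ Jn d n) : d - n < ell d n ν := by
  by_contra! hle
  apply hνJ
  have hν2 : ν 2 < 2 := by
    by_contra! h2
    have := Nat.mul_le_mul_left (d - 2 * n + 1) h2
    simp only [ell] at hle
    omega
  rw [eq_vec_of_mem_Delta hν, mem_Jn_iff]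
  simp only [ell] at hle
  interval_cases h : ν 2
  · right; exact ⟨ν 1, by omega, by simp⟩
  · exact Or.inl ⟨ν 1, by omega, rfl⟩

lemma sum_ell_Jn_lt {d n : ℕ} (hn : 3 * n < d) {J : Finset (Fin 3 → ℕ)} (hJ : J ∈ Nd d)
    (hJn : J ≠ Jn d n) : ∑ ν ∈ Jn d n, ell d n ν < ∑ ν ∈ J, ell d n ν :=
  sum_lt_sum_of_card_eq_of_le_of_lt ((card_Jn (by omega)).trans hJ.2.symm) hJn.symm
    (fun _ hν => ell_le_of_mem_Jn (by omega) hν)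
    (fun _ hν => lt_ell_of_notMem_Jn hn (hJ.1 (mem_sdiff.1 hν).1) (mem_sdiff.1 hν).2)

noncomputable def ellFunctional (d n : ℕ) : (Fin 3 → ℝ) →ₗ[ℝ] ℝ :=
  LinearMap.proj 1 + ((d - 2 * n + 1 : ℕ) : ℝ) • LinearMap.proj 2

lemma ellFunctional_toR_mJ (d n : ℕ) (J : Finset (Fin 3 → ℕ)) :
    ellFunctional d n (toR (mJ J)) = ∑ ν ∈ J, ell d n ν := by
  simp [ellFunctional, toR, mJ, ell, sum_add_distrib, mul_sum]

theorem vertex_mJn_general (d n : ℕ) (hn : 3 * n < d) :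
    toR (mJ (Jn d n)) ∈ Set.extremePoints ℝ (Qpoly d) := by
  refine mem_extremePoints_convexHull_of_forall_lt (ellFunctional d n)
    ⟨Jn d n, Jn_mem_Nd (by omega), rfl⟩ ?_
  rintro _ ⟨J, hJ, rfl⟩ hne
  rw [ellFunctional_toR_mJ, ellFunctional_toR_mJ]
  exact_mod_cast sum_ell_Jn_lt hn hJ (by rintro rfl; exact hne rfl)

/-- For every `d ≥ 3` and `0 ≤ n < d/3`, the point `m_{J(n)}` is a vertex
(extreme point) of `Q(d)`. -/
theorem vertex_mJn (d n : ℕ) (hd : 3 ≤ d) (hn : 3 * n < d) :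
    toR (mJ (Jn d n)) ∈ Set.extremePoints ℝ (Qpoly d) :=
  vertex_mJn_general d n hn
end

section
/- Let d ∈ ℕ and let m be an integer with 1 ≤ m ≤ d. Let E be the m×m matrix with entries E_{ij} = C(d−i, j−1) (binomial coefficient) for 1 ≤ i, j ≤ m. Then det(E) = 1 or det(E) = −1; in particular |det(E)| = 1. -/
/-!
Writing `n := d - m`, the matrix `E` is, up to reversing the order of its rows, the matrix
`(C(n + i, j))_{i,j < m}` of `m` consecutive rows of Pascal's triangle. By Vandermonde's
identity `C(n + i, j) = ∑ₖ C(i, k) C(n, j - k)` this matrix factors as the lower unitriangular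
Pascal matrix `(C(i, k))` times the upper unitriangular Toeplitz matrix `(C(n, j - k))`, so its
determinant is `1`, and `det E` is the sign of the row reversal.
-/

open Finset

theorem Nat.add_choose_eq_sum_range_ite (i a : ℕ) {j m : ℕ} (hj : j < m) :
    (i + a).choose j = ∑ k ∈ range m, i.choose k * if k ≤ j then a.choose (j - k) else 0 := by
  have hrange : (range m).filter (· ≤ j) = range (j + 1) := by
    ext k
    simp only [mem_filter, mem_range]
    omega
  rw [Nat.add_choose_eq, Finset.Nat.sum_antidiagonal_eq_sum_range_succ_mk]
  simp only [mul_ite, mul_zero]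
  rw [← sum_filter, hrange]

namespace Matrix

variable {R : Type*} [CommRing R] (m a : ℕ)

def pascalMatrix : Matrix (Fin m) (Fin m) R :=
  of fun i k => (i.val.choose k : R)

def binomialToeplitzMatrix : Matrix (Fin m) (Fin m) R :=
  of fun k j => if k ≤ j then (a.choose (j - k) : R) else 0

def shiftedPascalMatrix : Matrix (Fin m) (Fin m) R :=
  of fun i j => ((a + i).choose j : R)

theorem pascalMatrix_isLowerTriangular : (pascalMatrix m : Matrix _ _ R).IsLowerTriangular :=
  fun i k hik => by
    simp [pascalMatrix, Nat.choose_eq_zero_of_lt (show i.val < k.val from hik)]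

theorem binomialToeplitzMatrix_isUpperTriangular :
    (binomialToeplitzMatrix m a : Matrix _ _ R).IsUpperTriangular :=
  fun _ _ hjk => if_neg (not_le.mpr hjk)

@[simp]
theorem det_pascalMatrix : (pascalMatrix m : Matrix _ _ R).det = 1 := by
  rw [det_of_isLowerTriangular _ (pascalMatrix_isLowerTriangular m)]
  simp [pascalMatrix]

@[simp]
theorem det_binomialToeplitzMatrix : (binomialToeplitzMatrix m a : Matrix _ _ R).det = 1 := by
  rw [det_of_isUpperTriangular (binomialToeplitzMatrix_isUpperTriangular m a)]
  simp [binomialToeplitzMatrix]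

theorem shiftedPascalMatrix_eq_mul :
    (shiftedPascalMatrix m a : Matrix _ _ R) = pascalMatrix m * binomialToeplitzMatrix m a := by
  ext i j
  rw [mul_apply, shiftedPascalMatrix, of_apply, add_comm,
    Nat.add_choose_eq_sum_range_ite _ _ j.isLt, ← Fin.sum_univ_eq_sum_range]
  push_cast
  simp only [pascalMatrix, binomialToeplitzMatrix, of_apply, Fin.le_def]

@[simp]
theorem det_shiftedPascalMatrix : (shiftedPascalMatrix m a : Matrix _ _ R).det = 1 := by
  simp [shiftedPascalMatrix_eq_mul]

end Matrix

theorem det_E_pm_one_general (d m : ℕ) (hmd : m ≤ d)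
    (E : Matrix (Fin m) (Fin m) ℤ)
    (hE : ∀ i j : Fin m, E i j = ((d - 1 - i.val).choose j.val : ℤ)) :
    E.det = 1 ∨ E.det = -1 := by
  have hrev : E = (Matrix.shiftedPascalMatrix m (d - m)).submatrix Fin.revPerm id := by
    ext i j
    rw [hE, Matrix.submatrix_apply, Matrix.shiftedPascalMatrix, Matrix.of_apply, Fin.revPerm_apply,
      Fin.val_rev]
    congr 3
    omega
  have hdet : E.det = (Equiv.Perm.sign (Fin.revPerm : Equiv.Perm (Fin m)) : ℤ) := by
    rw [hrev, Matrix.det_permute, Matrix.det_shiftedPascalMatrix, mul_one, Int.cast_id]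
  rcases Int.units_eq_one_or (Equiv.Perm.sign (Fin.revPerm : Equiv.Perm (Fin m))) with h | h <;>
    simp [hdet, h]

/-- For `d ∈ ℕ` and `1 ≤ m ≤ d`, the `m × m` matrix `E` over `ℤ` with
(1-indexed) entries `Eᵢⱼ = C(d−i, j−1)` has determinant `1` or `−1`. -/
theorem det_E_pm_one (d m : ℕ) (hm1 : 1 ≤ m) (hmd : m ≤ d)
    (E : Matrix (Fin m) (Fin m) ℤ)
    (hE : ∀ i j : Fin m, E i j = ((d - 1 - i.val).choose j.val : ℤ)) :
    E.det = 1 ∨ E.det = -1 :=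
  det_E_pm_one_general d m hmd E hE
end
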